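/- Let D be a Prüfer domain, ℓ a length function on D, and I an ideal of D whose radical P = rad(I) is prime. Then ℓ(D/I) = ℓ(D_P/ID_P), where D_P/ID_P is regarded as a D-module. -/

import Mathlib

/-!
Let `J = ID_P ∩ D = {x | ux ∈ I for some u ∉ P}`. As a `D`-module, `D_P/ID_P` is the directed
union of the copies `s⁻¹(D/J)`, `s ∉ P`, of `D/J`, so upper continuity gives
`ℓ(D_P/ID_P) = ℓ(D/J)`, and it remains to show `ℓ(D/I) = ℓ(J/I) + ℓ(D/J)` equals `ℓ(D/J)`.
If `ℓ(J/I) ≠ 0`, some cyclic submodule `Dx̄` of `J/I` has nonzero length; pick `s ∉ P` with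
`sx ∈ I`. Localizing at maximal ideals, where `D` becomes a valuation ring, and using
`rad I = P`, one gets `Px ⊆ I`, so `Dx̄` is a quotient of `D/(J + sD)`. Since `s` is a
nonzerodivisor on `D/J`, the isomorphism `D/J ≅ s(D/J)` gives
`ℓ(D/J) = ℓ(D/J) + ℓ(D/(J + sD))`, which forces `ℓ(D/J) = ∞`.
-/

open scoped ENNReal

universe u

structure LengthFunction (R : Type u) [CommRing R] where
  toFun : ∀ (M : Type u) [AddCommGroup M] [Module R M], ℝ≥0∞
  zero' : ∀ (M : Type u) [AddCommGroup M] [Module R M], Subsingleton M → toFun M = 0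
  additive : ∀ (M₁ M₂ M₃ : Type u) [AddCommGroup M₁] [Module R M₁]
      [AddCommGroup M₂] [Module R M₂] [AddCommGroup M₃] [Module R M₃]
      (f : M₁ →ₗ[R] M₂) (g : M₂ →ₗ[R] M₃),
      Function.Injective f → Function.Surjective g →
      LinearMap.range f = LinearMap.ker g →
      toFun M₂ = toFun M₁ + toFun M₃
  upperContinuous : ∀ (M : Type u) [AddCommGroup M] [Module R M],
      toFun M = ⨆ (N : Submodule R M) (_ : N.FG), toFun N

/-- A Prüfer domain: the localization at every prime ideal is a valuation domain. -/
def IsPruferDomain (D : Type u) [CommRing D] [IsDomain D] : Prop :=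
  ∀ (P : Ideal D) (hP : P.IsPrime), haveI := hP; ValuationRing (Localization.AtPrime P)

lemma Ideal.range_lsmul_quotient {D : Type u} [CommRing D] (J : Ideal D) (s : D) :
    LinearMap.range (LinearMap.lsmul D (D ⧸ J) s) = Submodule.map J.mkQ (Ideal.span {s}) := by
  ext y
  constructor
  · rintro ⟨z, rfl⟩
    obtain ⟨e, rfl⟩ := J.mkQ_surjective z
    exact ⟨s * e, Ideal.mul_mem_right e _ (Ideal.mem_span_singleton_self s), rfl⟩
  · rintro ⟨t, ht, rfl⟩
    obtain ⟨e, rfl⟩ := Ideal.mem_span_singleton'.mp ht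
    exact ⟨J.mkQ e, by rw [LinearMap.lsmul_apply, ← map_smul, smul_eq_mul, mul_comm]⟩

namespace LengthFunction

variable {D : Type u} [CommRing D] (ℓ : LengthFunction D)
variable {M M' : Type u} [AddCommGroup M] [Module D M] [AddCommGroup M'] [Module D M']

lemma toFun_congr (e : M ≃ₗ[D] M') : ℓ.toFun M = ℓ.toFun M' := by
  rw [ℓ.additive M M' PUnit e.toLinearMap 0 e.injective (Function.surjective_to_subsingleton _)
      (by rw [LinearEquiv.range, LinearMap.ker_zero]),
    ℓ.zero' PUnit inferInstance, add_zero]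

lemma toFun_eq_add_quotient (N : Submodule D M) :
    ℓ.toFun M = ℓ.toFun N + ℓ.toFun (M ⧸ N) :=
  ℓ.additive _ _ _ N.subtype N.mkQ N.injective_subtype N.mkQ_surjective
    (by rw [Submodule.range_subtype, Submodule.ker_mkQ])

lemma toFun_le_of_injective (f : M →ₗ[D] M') (hf : Function.Injective f) :
    ℓ.toFun M ≤ ℓ.toFun M' := by
  rw [ℓ.toFun_eq_add_quotient (LinearMap.range f), ← ℓ.toFun_congr (LinearEquiv.ofInjective f hf)]
  exact le_self_add

lemma toFun_le_of_surjective (f : M →ₗ[D] M') (hf : Function.Surjective f) :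
    ℓ.toFun M' ≤ ℓ.toFun M := by
  rw [ℓ.toFun_eq_add_quotient (LinearMap.ker f), ℓ.toFun_congr (f.quotKerEquivOfSurjective hf)]
  exact le_add_self

lemma toFun_sup_le (U V : Submodule D M) : ℓ.toFun ↥(U ⊔ V) ≤ ℓ.toFun U + ℓ.toFun V := by
  rw [ℓ.toFun_eq_add_quotient (Submodule.comap (U ⊔ V).subtype V),
    ℓ.toFun_congr (Submodule.comapSubtypeEquivOfLe le_sup_right),
    ← ℓ.toFun_congr (LinearMap.quotientInfEquivSupQuotient U V), add_comm]
  gcongr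
  exact ℓ.toFun_le_of_surjective _ (Submodule.mkQ_surjective _)

lemma toFun_eq_zero_of_forall_span_singleton (h : ∀ w : M, ℓ.toFun ↥(D ∙ w) = 0) :
    ℓ.toFun M = 0 := by
  classical
  have hspan (T : Finset M) : ℓ.toFun ↥(Submodule.span D (T : Set M)) = 0 := by
    induction T using Finset.induction_on with
    | empty => exact ℓ.zero' _ (by simp only [Finset.coe_empty, Submodule.span_empty]; infer_instance)
    | insert w T _ ih =>
      rw [Finset.coe_insert, Submodule.span_insert]
      exact le_antisymm ((ℓ.toFun_sup_le _ _).trans (by rw [h w, ih, add_zero])) bot_le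
  rw [ℓ.upperContinuous M]
  refine le_antisymm (iSup₂_le fun N ⟨T, hT⟩ => ?_) bot_le
  rw [← hT, hspan]

lemma toFun_span_singleton_le (w : M) {A : Ideal D} (hA : A ≤ Ideal.torsionOf D M w) :
    ℓ.toFun ↥(D ∙ w) ≤ ℓ.toFun (D ⧸ A) := by
  rw [← ℓ.toFun_congr (Ideal.quotTorsionOfEquivSpanSingleton D M w)]
  exact ℓ.toFun_le_of_surjective (Submodule.factor hA) (Submodule.factor_surjective hA)

lemma toFun_eq_top_of_injective (f : M →ₗ[D] M) (hf : Function.Injective f)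
    (h : ℓ.toFun (M ⧸ LinearMap.range f) ≠ 0) : ℓ.toFun M = ⊤ := by
  have hself := ℓ.toFun_eq_add_quotient (LinearMap.range f)
  rw [← ℓ.toFun_congr (LinearEquiv.ofInjective f hf)] at hself
  by_contra hM
  exact h ((ENNReal.add_right_inj hM).1 (by rw [add_zero, ← hself]))

lemma toFun_eq_of_smul_mem (S : Submonoid D) (N : Submodule D M)
    (hinj : ∀ s ∈ S, Function.Injective fun y : M => s • y)
    (hmem : ∀ y : M, ∃ s ∈ S, s • y ∈ N) : ℓ.toFun M = ℓ.toFun N := by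
  classical
  refine le_antisymm ?_ (ℓ.toFun_le_of_injective N.subtype N.injective_subtype)
  rw [ℓ.upperContinuous M]
  refine iSup₂_le fun N' ⟨T, hT⟩ => ?_
  choose t ht htN using hmem
  set s := ∏ y ∈ T, t y
  have hsN : N' ≤ N.comap (LinearMap.lsmul D M s) := by
    rw [← hT, Submodule.span_le]
    intro y hy
    obtain ⟨c, hc⟩ := Finset.dvd_prod_of_mem t hy
    simpa [s, hc, mul_comm _ c, mul_smul] using N.smul_mem c (htN y)
  exact ℓ.toFun_le_of_injective ((LinearMap.lsmul D M s).restrict hsN)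
    fun y z hyz => Subtype.ext (hinj s (S.prod_mem fun y _ => ht y) (congrArg Subtype.val hyz))

lemma toFun_quotient_eq_top {J : Ideal D} {s : D} (hs : ∀ d, s * d ∈ J → d ∈ J)
    (h : ℓ.toFun (D ⧸ (J ⊔ Ideal.span {s})) ≠ 0) : ℓ.toFun (D ⧸ J) = ⊤ := by
  refine ℓ.toFun_eq_top_of_injective (LinearMap.lsmul D (D ⧸ J) s) ?_ ?_
  · refine (injective_iff_map_eq_zero _).2 fun y hy => ?_
    obtain ⟨d, rfl⟩ := J.mkQ_surjective y
    rw [LinearMap.lsmul_apply, ← map_smul, Submodule.mkQ_apply,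
      Submodule.Quotient.mk_eq_zero] at hy
    exact (Submodule.Quotient.mk_eq_zero J).2 (hs d hy)
  · rwa [Ideal.range_lsmul_quotient, ℓ.toFun_congr (Submodule.quotientQuotientEquivQuotientSup _ _)]

lemma toFun_quotient_eq_quotient_comap {A : Type u} [CommRing A] [Algebra D A] (S : Submonoid D)
    [IsLocalization S A] (K : Ideal A) :
    ℓ.toFun (A ⧸ K) = ℓ.toFun (D ⧸ K.comap (algebraMap D A)) := by
  let g : D →ₗ[D] A ⧸ K := K.mkQ.restrictScalars D ∘ₗ Algebra.linearMap D A
  have hker : LinearMap.ker g = K.comap (algebraMap D A) := by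
    ext d
    exact Submodule.Quotient.mk_eq_zero K
  rw [ℓ.toFun_eq_of_smul_mem S (LinearMap.range g), ← hker,
    ℓ.toFun_congr g.quotKerEquivRange]
  · intro s hs y z hyz
    dsimp only at hyz
    rwa [← algebraMap_smul A s y, ← algebraMap_smul A s z,
      (IsLocalization.map_units A ⟨s, hs⟩).smul_left_cancel] at hyz
  · intro y
    obtain ⟨a, rfl⟩ := K.mkQ_surjective y
    obtain ⟨d, t, rfl⟩ := IsLocalization.exists_mk'_eq S a
    refine ⟨t, t.2, d, ?_⟩
    change K.mkQ.restrictScalars D (algebraMap D A d) =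
      (t : D) • K.mkQ.restrictScalars D (IsLocalization.mk' A d t)
    rw [← map_smul, Algebra.smul_def, IsLocalization.mk'_spec']

end LengthFunction

namespace IsPruferDomain

variable {D : Type u} [CommRing D] [IsDomain D]

lemma mul_mem_of_notMem_of_mul_mem (hD : IsPruferDomain D) {I P : Ideal D} [P.IsPrime]
    (hP : P ≤ I.radical) {s x j : D} (hs : s ∉ P) (hsx : s * x ∈ I) (hj : j ∈ P) :
    j * x ∈ I := by
  refine Ideal.mem_of_localization_maximal fun m hm => ?_
  have := hm.isPrime
  by_cases hPm : P ≤ m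
  · have := hD m hm.isPrime
    obtain ⟨c, hc | hc⟩ := ValuationRing.cond (algebraMap D (Localization.AtPrime m) j)
      (algebraMap D (Localization.AtPrime m) s)
    · -- `s = j c` would put `s` in `PD_m ∩ D = P`.
      refine absurd ?_ hs
      rw [← IsLocalization.under_map_of_isPrime_disjoint m.primeCompl (Localization.AtPrime m)
        ‹P.IsPrime› (Set.disjoint_left.2 fun a ha haP => ha (hPm haP)), Ideal.mem_comap, ← hc]
      exact Ideal.mul_mem_right _ _ (Ideal.mem_map_of_mem _ hj)
    · rw [map_mul, ← hc, mul_right_comm, ← map_mul]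
      exact Ideal.mul_mem_right _ _ (Ideal.mem_map_of_mem _ hsx)
  · obtain ⟨i, hi, him⟩ : ∃ i ∈ I, i ∉ m := by
      by_contra! hIm
      exact hPm (hP.trans ((Ideal.IsPrime.radical_le_iff hm.isPrime).2 hIm))
    rw [Ideal.eq_top_of_isUnit_mem _ (Ideal.mem_map_of_mem _ hi)
      (IsLocalization.map_units _ (⟨i, him⟩ : m.primeCompl))]
    trivial

lemma toFun_quotient_eq_of_saturation (hD : IsPruferDomain D) (ℓ : LengthFunction D)
    {I P J : Ideal D} [P.IsPrime] (hrad : I.radical = P)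
    (hJ : ∀ x, x ∈ J ↔ ∃ u ∉ P, u * x ∈ I) : ℓ.toFun (D ⧸ I) = ℓ.toFun (D ⧸ J) := by
  have hIJ : I ≤ J := fun x hx =>
    (hJ x).2 ⟨1, (Ideal.ne_top_iff_one P).1 Ideal.IsPrime.ne_top', by rwa [one_mul]⟩
  have hJP : J ≤ P := fun x hx => by
    obtain ⟨u, hu, hux⟩ := (hJ x).1 hx
    exact (Ideal.IsPrime.mem_or_mem ‹_› (hrad ▸ Ideal.le_radical hux)).resolve_left hu
  set N := Submodule.map I.mkQ J
  rw [ℓ.toFun_eq_add_quotient N, ℓ.toFun_congr (Submodule.quotientQuotientEquivQuotient I J hIJ)]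
  suffices h : ℓ.toFun N ≠ 0 → ℓ.toFun (D ⧸ J) = ⊤ by
    by_cases hN : ℓ.toFun N = 0
    · rw [hN, zero_add]
    · rw [h hN, add_top]
  intro hN
  obtain ⟨w, hw⟩ : ∃ w : N, ℓ.toFun ↥(D ∙ w) ≠ 0 := by
    by_contra! h
    exact hN (ℓ.toFun_eq_zero_of_forall_span_singleton h)
  obtain ⟨_, x, hx, rfl⟩ := w
  obtain ⟨s, hs, hsx⟩ := (hJ x).1 hx
  have htors : ∀ a, a * x ∈ I → a ∈ Ideal.torsionOf D N ⟨I.mkQ x, x, hx, rfl⟩ := fun a ha => by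
    rw [Ideal.mem_torsionOf_iff, Subtype.ext_iff, Submodule.coe_smul, ← map_smul]
    exact (Submodule.Quotient.mk_eq_zero I).2 ha
  refine ℓ.toFun_quotient_eq_top (s := s) (fun d hd => ?_) fun h0 => hw ?_
  · obtain ⟨u, hu, hud⟩ := (hJ _).1 hd
    exact (hJ d).2 ⟨u * s, P.primeCompl.mul_mem hu hs, by rwa [mul_assoc]⟩
  · refine le_antisymm ((ℓ.toFun_span_singleton_le _ (sup_le ?_ ?_)).trans h0.le) bot_le
    · exact fun j hj => htors j (hD.mul_mem_of_notMem_of_mul_mem hrad.ge hs hsx (hJP hj))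
    · exact (Ideal.span_singleton_le_iff_mem _).2 (htors s hsx)

end IsPruferDomain

theorem prufer_length_radical_prime {D : Type u} [CommRing D] [IsDomain D]
    (hD : IsPruferDomain D) (ℓ : LengthFunction D) (I P : Ideal D) [P.IsPrime]
    (hrad : I.radical = P) :
    ℓ.toFun (D ⧸ I) =
      ℓ.toFun (Localization.AtPrime P ⧸ I.map (algebraMap D (Localization.AtPrime P))) := by
  rw [ℓ.toFun_quotient_eq_quotient_comap (A := Localization.AtPrime P) P.primeCompl]
  exact hD.toFun_quotient_eq_of_saturation ℓ hrad fun x =>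
    IsLocalization.algebraMap_mem_map_algebraMap_iff P.primeCompl (Localization.AtPrime P) I x
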